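/- arXiv:1910.12643 — 7 statements merged into one kernel-verified Lean document; each statement's English description precedes it below -/
import Mathlib

section
/- Let k = 0 (a synchronous channel). If the distinction between a channel operation and its completion is dropped, then for every index i, the happens-before relation hb₀ (the transitive closure of R₀) satisfies both hb₀ (sd i) (rv i) and hb₀ (rv i) (sd i); consequently hb₀ is neither asymmetric nor irreflexive, i.e., it fails to be a strict partial order. -/
/-- Events of a single channel: the i-th send and the i-th receive. -/
inductive Ev : Type
  | sd : ℕ → Ev
  | rv : ℕ → Ev

open Ev

/-- The "conflated" generating relation for a channel of capacity `k`,
obtained by dropping the distinction between a channel operation and its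
completion: a send happens-before the corresponding receive, and the i-th
receive happens-before the (i+k)-th send. -/
inductive R (k : ℕ) : Ev → Ev → Prop
  | send_rv (i : ℕ) : R k (sd i) (rv i)
  | rv_send (i : ℕ) : R k (rv i) (sd (i + k))

/-- The conflated happens-before relation: transitive closure of `R k`. -/
def hb (k : ℕ) : Ev → Ev → Prop := Relation.TransGen (R k)

theorem hb_sd_rv (k i : ℕ) : hb k (sd i) (rv i) :=
  .single (.send_rv i)

theorem hb_rv_sd_add (k i : ℕ) : hb k (rv i) (sd (i + k)) :=
  .single (.rv_send i)

theorem hb_sd_sd_add (k i : ℕ) : hb k (sd i) (sd (i + k)) :=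
  (hb_sd_rv k i).trans (hb_rv_sd_add k i)

/-- For a synchronous channel (k = 0), under the conflated rules, every send
and its corresponding receive are in happens-before relation in both
directions; consequently `hb 0` is neither asymmetric nor irreflexive, hence
fails to be a strict partial order. -/
theorem conflated_sync_not_strict_order :
    (∀ i : ℕ, hb 0 (sd i) (rv i) ∧ hb 0 (rv i) (sd i)) ∧
    ¬ (∀ x y : Ev, hb 0 x y → ¬ hb 0 y x) ∧ ¬ Irreflexive (hb 0) := by
  have cycle (i : ℕ) : hb 0 (sd i) (rv i) ∧ hb 0 (rv i) (sd i) :=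
    ⟨hb_sd_rv 0 i, hb_rv_sd_add 0 i⟩
  refine ⟨cycle, fun asymm => asymm _ _ (cycle 0).1 (cycle 0).2, fun irrefl => ?_⟩
  exact irrefl (sd 0) (hb_sd_sd_add 0 0)
end

section
/- For every channel capacity k, every index i, and every n ≥ 1, the conflated happens-before relation hb_k (the transitive closure of R_k) relates the i-th receive to the (i + n·k)-th receive and the i-th send to the (i + n·k)-th send: hb_k (rv i) (rv (i + n*k)) and hb_k (sd i) (sd (i + n*k)). (Thus, under the conflated rules, each channel operation has a lingering happens-before effect on all later operations of the same kind whose index differs by a multiple of k.) -/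
open Ev

theorem Relation.TransGen.add_mul_of_add {α : Type*} {r : α → α → Prop} {f : ℕ → α} {k : ℕ}
    (step : ∀ i, Relation.TransGen r (f i) (f (i + k))) (i : ℕ) {n : ℕ} (hn : 1 ≤ n) :
    Relation.TransGen r (f i) (f (i + n * k)) := by
  induction n, hn using Nat.le_induction with
  | base => simpa using step i
  | succ m _ ih => simpa [Nat.succ_mul, Nat.add_assoc] using ih.trans (step (i + m * k))

theorem hb_rv_rv_add (k i : ℕ) : hb k (rv i) (rv (i + k)) :=
  .head (R.rv_send i) (.single (R.send_rv (i + k)))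

/-- Under the conflated rules, each channel operation has a lingering
happens-before effect on all later operations of the same kind whose index
differs by a multiple of `k`. -/
theorem conflated_lingering_effect (k i n : ℕ) (hn : 1 ≤ n) :
    hb k (rv i) (rv (i + n * k)) ∧ hb k (sd i) (sd (i + n * k)) :=
  ⟨.add_mul_of_add (hb_rv_rv_add k) i hn, .add_mul_of_add (hb_sd_sd_add k) i hn⟩
end

section
/- For every channel capacity k, the happens-before relation hb'_k (the transitive closure of R'_k) is irreflexive and asymmetric; hence, being also transitive, it is a strict partial order on the channel events. -/
/-- Events of a single channel, distinguishing each operation from its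
completion: the i-th send operation and completion, and the i-th receive
operation and completion. -/
inductive Ev' : Type
  | sdOp : ℕ → Ev'
  | sdCmp : ℕ → Ev'
  | rvOp : ℕ → Ev'
  | rvCmp : ℕ → Ev'

open Ev'

/-- The generating relation for a channel of capacity `k`, distinguishing an
operation from its completion. -/
inductive R' (k : ℕ) : Ev' → Ev' → Prop
  | sd_self (i : ℕ) : R' k (sdOp i) (sdCmp i)
  | rv_self (i : ℕ) : R' k (rvOp i) (rvCmp i)
  | sd_rv (i : ℕ) : R' k (sdOp i) (rvCmp i)
  | rv_sd (i : ℕ) : R' k (rvOp i) (sdCmp (i + k))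

/-- The happens-before relation: transitive closure of `R' k`. -/
def hb' (k : ℕ) : Ev' → Ev' → Prop := Relation.TransGen (R' k)

def rank : Ev' → ℕ
  | sdOp i => 4 * i
  | rvOp i => 4 * i + 1
  | rvCmp i => 4 * i + 2
  | sdCmp i => 4 * i + 3

lemma R'_rank_lt {k : ℕ} {x y : Ev'} (h : R' k x y) : rank x < rank y := by
  cases h <;> simp only [rank] <;> omega

lemma hb'_rank_lt {k : ℕ} {x y : Ev'} (h : hb' k x y) : rank x < rank y := by
  induction h with
  | single h => exact R'_rank_lt h
  | tail _ h ih => exact ih.trans (R'_rank_lt h)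

/-- For every channel capacity `k`, the happens-before relation `hb' k` is
irreflexive and asymmetric; being also transitive (it is a transitive
closure), it is a strict partial order on channel events. -/
theorem hb'_strict_partial_order (k : ℕ) :
    Irreflexive (hb' k) ∧ (∀ x y : Ev', hb' k x y → ¬ hb' k y x) ∧ Transitive (hb' k) := by
  refine ⟨fun x h => ?_, fun x y hxy hyx => ?_, fun _ _ _ => Relation.TransGen.trans⟩
  · exact lt_irrefl _ (hb'_rank_lt h)
  · exact lt_irrefl _ ((hb'_rank_lt hxy).trans (hb'_rank_lt hyx))
end

section
/- For every channel capacity k and all indices i ≠ j, no send event of index i is related by hb'_k to any send event of index j: ¬ hb'_k (sdOp i) (sdOp j), ¬ hb'_k (sdOp i) (sdCmp j), ¬ hb'_k (sdCmp i) (sdOp j), and ¬ hb'_k (sdCmp i) (sdCmp j). (Distinguishing an operation from its completion prevents distinct sends from being in happens-before relation with one another.) -/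
open Ev'

lemma hb'_sdOp_dest {k i : ℕ} {y : Ev'} (h : hb' k (sdOp i) y) :
    y = sdCmp i ∨ y = rvCmp i := by
  induction h with
  | single h => cases h <;> simp
  | tail _ h ih => rcases ih with rfl | rfl <;> cases h

lemma not_hb'_sdCmp {k i : ℕ} {y : Ev'} (h : hb' k (sdCmp i) y) : False := by
  induction h with
  | single h => cases h
  | tail _ _ ih => exact ih

/-- Distinguishing an operation from its completion prevents distinct sends
from being in happens-before relation with one another. -/
theorem no_hb'_between_distinct_sends (k i j : ℕ) (hij : i ≠ j) :
    ¬ hb' k (sdOp i) (sdOp j) ∧ ¬ hb' k (sdOp i) (sdCmp j) ∧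
    ¬ hb' k (sdCmp i) (sdOp j) ∧ ¬ hb' k (sdCmp i) (sdCmp j) := by
  refine ⟨?_, ?_, fun h => (not_hb'_sdCmp h).elim, fun h => (not_hb'_sdCmp h).elim⟩
  · intro h; rcases hb'_sdOp_dest h with h | h <;> simp at h
  · intro h; rcases hb'_sdOp_dest h with h | h <;> simp_all
end

section
/- For every channel capacity k and all indices i ≠ j, no receive event of index i is related by hb'_k to any receive event of index j: ¬ hb'_k (rvOp i) (rvOp j), ¬ hb'_k (rvOp i) (rvCmp j), ¬ hb'_k (rvCmp i) (rvOp j), and ¬ hb'_k (rvCmp i) (rvCmp j). (Distinguishing an operation from its completion prevents distinct receives from being in happens-before relation with one another.) -/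
open Ev'

lemma hb'_rvOp_succ {k i : ℕ} {e : Ev'} (h : hb' k (rvOp i) e) :
    e = rvCmp i ∨ e = sdCmp (i + k) := by
  induction h with
  | single h => cases h <;> simp
  | tail h' h ih =>
    rcases ih with rfl | rfl <;> cases h

lemma hb'_rvCmp {k i : ℕ} {e : Ev'} (h : hb' k (rvCmp i) e) : False := by
  induction h with
  | single h => cases h
  | tail h' h ih => exact ih

/-- Distinguishing an operation from its completion prevents distinct
receives from being in happens-before relation with one another. -/
theorem no_hb'_between_distinct_receives (k i j : ℕ) (hij : i ≠ j) :
    ¬ hb' k (rvOp i) (rvOp j) ∧ ¬ hb' k (rvOp i) (rvCmp j) ∧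
    ¬ hb' k (rvCmp i) (rvOp j) ∧ ¬ hb' k (rvCmp i) (rvCmp j) := by
  refine ⟨fun h => ?_, fun h => ?_, fun h => hb'_rvCmp h, fun h => hb'_rvCmp h⟩
  · rcases hb'_rvOp_succ h with h | h <;> simp at h
  · rcases hb'_rvOp_succ h with h | h <;> simp_all
end

section
/- The relative order of occurrences of two dependent events is invariant under trace equivalence: let a b : E with ¬ I a b (with I symmetric and E having decidable equality). Then for all traces h h' with h ≈ h', the sublist of h consisting of the occurrences of a and b equals the corresponding sublist of h', i.e., h.filter (fun e => e = a ∨ e = b) = h'.filter (fun e => e = a ∨ e = b). -/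
/-- `SwapStep I h h'` holds iff `h'` is obtained from `h` by commuting one
adjacent pair of independent events (with respect to the independence
relation `I`). -/
def SwapStep {E : Type*} (I : E → E → Prop) (h h' : List E) : Prop :=
  ∃ (u v : List E) (a b : E), I a b ∧ h = u ++ a :: b :: v ∧ h' = u ++ b :: a :: v

/-- Trace equivalence: the reflexive-transitive closure of `SwapStep I`. -/
def TraceEquiv {E : Type*} (I : E → E → Prop) : List E → List E → Prop :=
  Relation.ReflTransGen (SwapStep I)

/-- The relative order of occurrences of two dependent events is invariant
under trace equivalence: if `¬ I a b`, then projecting any two equivalent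
traces onto the occurrences of `a` and `b` yields the same sublist. -/
theorem traceEquiv_filter_dependent_pair {E : Type*} [DecidableEq E]
    (I : E → E → Prop) (hI : Symmetric I) (a b : E) (hab : ¬ I a b)
    (h h' : List E) (hequiv : TraceEquiv I h h') :
    h.filter (fun e => decide (e = a ∨ e = b)) =
      h'.filter (fun e => decide (e = a ∨ e = b)) := by
  induction hequiv with
  | refl => rfl
  | tail _ hstep ih =>
    obtain ⟨u, v, x, y, hxy, rfl, rfl⟩ := hstep
    rw [ih]
    simp only [List.filter_append, List.filter_cons]
    split <;> split <;> try rfl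
    next hx hy =>
      -- both x and y satisfy the predicate
      simp only [decide_eq_true_eq] at hx hy
      have : x = y := by
        rcases hx with rfl | rfl <;> rcases hy with rfl | rfl
        · rfl
        · exact absurd hxy hab
        · exact absurd (hI hxy) hab
        · rfl
      subst this; rfl
end

section
/- Projection onto a pairwise-dependent set of events is invariant under trace equivalence: let A : Set E be such that for all a ∈ A and b ∈ A, ¬ I a b (with I symmetric and membership in A decidable). Then for all traces h h' with h ≈ h', the sublist of h consisting of the events belonging to A equals the corresponding sublist of h', i.e., h.filter (· ∈ A) = h'.filter (· ∈ A). -/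
/-- Projection onto a pairwise-dependent set of events is invariant under
trace equivalence: if no two events of `A` are independent, then projecting
any two equivalent traces onto the events belonging to `A` yields the same
sublist. -/
theorem traceEquiv_filter_dependent_set {E : Type*} (I : E → E → Prop)
    (hI : Symmetric I) (A : Set E) [DecidablePred (· ∈ A)]
    (hA : ∀ a ∈ A, ∀ b ∈ A, ¬ I a b)
    (h h' : List E) (hequiv : TraceEquiv I h h') :
    h.filter (fun e => decide (e ∈ A)) = h'.filter (fun e => decide (e ∈ A)) := by
  induction hequiv with
  | refl => rfl
  | tail _ hstep ih =>
    obtain ⟨u, v, a, b, hab, rfl, rfl⟩ := hstep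
    rw [ih]
    simp only [List.filter_append, List.filter_cons]
    have : ¬ (a ∈ A ∧ b ∈ A) := fun ⟨ha, hb⟩ => hA a ha b hb hab
    by_cases ha : a ∈ A <;> by_cases hb : b ∈ A <;> simp_all
end
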